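/- Let s₁, s₂, s₁₂, p₁, p₂ be real numbers. Then the complex-valued function t ↦ (1-t)^{-1/2 - i s₁₂ + i p₁ + i p₂} · t^{-i p₂ + i s₂ - 1/2} · ₂F₁(1/2-i s₁₂+i s₁+i s₂, 1/2-i s₁₂-i s₁+i s₂; 1+2i s₂; t) is integrable with respect to Lebesgue measure on (0,1/2), and the function t ↦ (1-t)^{i s₁₂ - 1/2 + i p₁ + i p₂} · t^{-i p₂ + i s₂ - 1/2} · ₂F₁(1/2+i s₁₂-i s₁+i s₂, 1/2+i s₁₂+i s₁+i s₂; 1+2i s₁₂; 1-t) is integrable with respect to Lebesgue measure on (1/2,1). (Convergence of the two pieces of the integral I₂(C,C,C) for the coupling of two continuous series to a continuous series.) -/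

import Mathlib

open Complex Filter Set MeasureTheory

/-- The `n`-th term of the Gauss hypergeometric series `₂F₁(a,b;c;z)`. -/
noncomputable def hypTerm (a b c z : ℂ) (n : ℕ) : ℂ :=
  (ascPochhammer ℂ n).eval a * (ascPochhammer ℂ n).eval b /
    ((ascPochhammer ℂ n).eval c * (n.factorial : ℂ)) * z ^ n

/-- The Gauss hypergeometric function `₂F₁(a,b;c;z)`. -/
noncomputable def hyp (a b c z : ℂ) : ℂ := ∑' n, hypTerm a b c z n

/-!
When `c` is not a nonpositive integer, the hypergeometric series has radius of convergence at
least `1` (it is `1`, or `∞` when the series terminates), so `t ↦ ₂F₁(a, b; c; t)` is continuous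
on `[0, 1/2]` and `t ↦ ₂F₁(a, b; c; 1 - t)` on `[1/2, 1]`; here `c = 1 + 2is` with `Re c = 1`.
The two remaining factors `t ^ v` and `(1 - t) ^ w` have `Re v = Re w = -1/2 > -1`, so on each
half one of them is continuous and the other is integrable at the endpoint.
-/

theorem hyp_eq_ordinaryHypergeometric (a b c : ℂ) : hyp a b c = ₂F₁ a b c := by
  ext z
  rw [ordinaryHypergeometric_eq_tsum]
  exact tsum_congr fun n => by simp only [hypTerm, smul_eq_mul]; ring

theorem one_le_radius_ordinaryHypergeometricSeries {𝕂 : Type*} (𝔸 : Type*) [RCLike 𝕂]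
    [NormedDivisionRing 𝔸] [NormedAlgebra 𝕂 𝔸] (a b : 𝕂) {c : 𝕂}
    (hc : ∀ k : ℕ, (k : 𝕂) ≠ -c) : 1 ≤ (ordinaryHypergeometricSeries 𝔸 a b c).radius := by
  by_cases ha : ∃ k : ℕ, (k : 𝕂) = -a
  · obtain ⟨k, hk⟩ := ha
    rw [neg_eq_iff_eq_neg.mp hk.symm, ordinaryHypergeometric_radius_top_of_neg_nat₁]
    exact le_top
  by_cases hb : ∃ k : ℕ, (k : 𝕂) = -b
  · obtain ⟨k, hk⟩ := hb
    rw [neg_eq_iff_eq_neg.mp hk.symm, ordinaryHypergeometric_radius_top_of_neg_nat₂]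
    exact le_top
  push Not at ha hb
  exact (ordinaryHypergeometricSeries_radius_eq_one 𝔸 a b c fun k => ⟨ha k, hb k, hc k⟩).ge

theorem continuousOn_ordinaryHypergeometric {𝕂 : Type*} {𝔸 : Type*} [RCLike 𝕂]
    [NormedDivisionRing 𝔸] [NormedAlgebra 𝕂 𝔸] [CompleteSpace 𝔸] (a b : 𝕂) {c : 𝕂}
    (hc : ∀ k : ℕ, (k : 𝕂) ≠ -c) :
    ContinuousOn (₂F₁ a b c) (Metric.ball (0 : 𝔸) 1) := by
  have h := (ordinaryHypergeometricSeries 𝔸 a b c).continuousOn.mono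
    (Metric.eball_subset_eball (one_le_radius_ordinaryHypergeometricSeries 𝔸 a b hc))
  rwa [← Metric.eball_ofReal, ENNReal.ofReal_one]

theorem continuousOn_hyp_ofReal (a b : ℂ) {c : ℂ} (hc : ∀ k : ℕ, (k : ℂ) ≠ -c) :
    ContinuousOn (fun t : ℝ => hyp a b c t) (Ioo (-1) 1) := by
  rw [hyp_eq_ordinaryHypergeometric]
  refine (continuousOn_ordinaryHypergeometric a b hc).comp continuous_ofReal.continuousOn
    fun t ht => ?_
  simpa [abs_lt] using ht

theorem natCast_ne_neg_of_re_pos {c : ℂ} (hc : 0 < c.re) (k : ℕ) : (k : ℂ) ≠ -c := by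
  intro h
  have := congrArg Complex.re h
  simp only [natCast_re, neg_re] at this
  linarith [k.cast_nonneg (α := ℝ)]

theorem intervalIntegrable_cpow_mul {v : ℂ} (hv : -1 < v.re) {g : ℝ → ℂ} {r : ℝ}
    (hg : ContinuousOn g (uIcc 0 r)) :
    IntervalIntegrable (fun t : ℝ => (t : ℂ) ^ v * g t) volume 0 r :=
  (intervalIntegral.intervalIntegrable_cpow' hv).mul_continuousOn hg

theorem intervalIntegrable_one_sub_cpow_mul {w : ℂ} (hw : -1 < w.re) {g : ℝ → ℂ} {r : ℝ}
    (hg : ContinuousOn g (uIcc r 1)) :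
    IntervalIntegrable (fun t : ℝ => ((1 - t : ℝ) : ℂ) ^ w * g t) volume r 1 := by
  have hg' : ContinuousOn (fun t => g (1 - t)) (uIcc 0 (1 - r)) := by
    refine hg.comp (by fun_prop) fun t ht => ?_
    rw [mem_uIcc] at ht ⊢
    rcases ht with ⟨h₁, h₂⟩ | ⟨h₁, h₂⟩ <;> [left; right] <;> constructor <;> linarith
  simpa using ((intervalIntegrable_cpow_mul hw hg').comp_sub_left 1).symm

theorem integrableOn_cpow_mul_cpow_mul_hyp (a b : ℂ) {c : ℂ} (hc : ∀ k : ℕ, (k : ℂ) ≠ -c)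
    (w : ℂ) {v : ℂ} (hv : -1 < v.re) {r : ℝ} (hr₀ : 0 ≤ r) (hr₁ : r < 1) :
    IntegrableOn (fun t : ℝ => ((1 - t : ℝ) : ℂ) ^ w * (t : ℂ) ^ v * hyp a b c t)
      (Ioo 0 r) volume := by
  have hg : ContinuousOn (fun t : ℝ => ((1 - t : ℝ) : ℂ) ^ w * hyp a b c t) (uIcc 0 r) := by
    rw [uIcc_of_le hr₀]
    refine ContinuousOn.mul ?_ ((continuousOn_hyp_ofReal a b hc).mono fun t ht => ?_)
    · exact (continuous_ofReal.comp (continuous_sub_left 1)).continuousOn.cpow_const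
        fun t ht => ofReal_mem_slitPlane.2 (by simp; linarith [ht.2])
    · exact ⟨by linarith [ht.1], by linarith [ht.2]⟩
  have h := intervalIntegrable_cpow_mul hv hg
  rw [intervalIntegrable_iff_integrableOn_Ioc_of_le hr₀] at h
  exact (h.mono_set Ioo_subset_Ioc_self).congr_fun (fun t _ => by ring) measurableSet_Ioo

theorem integrableOn_cpow_mul_cpow_mul_hyp_one_sub (a b : ℂ) {c : ℂ}
    (hc : ∀ k : ℕ, (k : ℂ) ≠ -c) {w : ℂ} (hw : -1 < w.re) (v : ℂ) {r : ℝ} (hr₀ : 0 < r)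
    (hr₁ : r ≤ 1) :
    IntegrableOn (fun t : ℝ => ((1 - t : ℝ) : ℂ) ^ w * (t : ℂ) ^ v * hyp a b c ((1 - t : ℝ) : ℂ))
      (Ioo r 1) volume := by
  have hg : ContinuousOn (fun t : ℝ => (t : ℂ) ^ v * hyp a b c ((1 - t : ℝ) : ℂ))
      (uIcc r 1) := by
    rw [uIcc_of_le hr₁]
    refine ContinuousOn.mul ?_ ((continuousOn_hyp_ofReal a b hc).comp
      (continuous_sub_left 1).continuousOn fun t ht => ?_)
    · exact continuous_ofReal.continuousOn.cpow_const
        fun t ht => ofReal_mem_slitPlane.2 (by linarith [ht.1])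
    · exact ⟨by linarith [ht.2], by linarith [ht.1]⟩
  have h := intervalIntegrable_one_sub_cpow_mul hw hg
  rw [intervalIntegrable_iff_integrableOn_Ioc_of_le hr₁] at h
  exact (h.mono_set Ioo_subset_Ioc_self).congr_fun (fun t _ => by ring) measurableSet_Ioo

/-- Convergence of the two pieces of the integral `I₂(C,C,C)` for the coupling of two
continuous series to a continuous series. -/
theorem integral_CCC_I2_integrable (s₁ s₂ s₁₂ p₁ p₂ : ℝ) :
    IntegrableOn (fun t : ℝ =>
        ((1 - t : ℝ) : ℂ) ^ (-(1 / 2 : ℂ) - I * (s₁₂ : ℂ) + I * (p₁ : ℂ) + I * (p₂ : ℂ)) *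
          ((t : ℝ) : ℂ) ^ (-(I * (p₂ : ℂ)) + I * (s₂ : ℂ) - 1 / 2) *
          hyp (1 / 2 - I * (s₁₂ : ℂ) + I * (s₁ : ℂ) + I * (s₂ : ℂ))
            (1 / 2 - I * (s₁₂ : ℂ) - I * (s₁ : ℂ) + I * (s₂ : ℂ))
            (1 + 2 * I * (s₂ : ℂ)) t)
      (Ioo 0 (1 / 2)) volume ∧
    IntegrableOn (fun t : ℝ =>
        ((1 - t : ℝ) : ℂ) ^ (I * (s₁₂ : ℂ) - 1 / 2 + I * (p₁ : ℂ) + I * (p₂ : ℂ)) *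
          ((t : ℝ) : ℂ) ^ (-(I * (p₂ : ℂ)) + I * (s₂ : ℂ) - 1 / 2) *
          hyp (1 / 2 + I * (s₁₂ : ℂ) - I * (s₁ : ℂ) + I * (s₂ : ℂ))
            (1 / 2 + I * (s₁₂ : ℂ) + I * (s₁ : ℂ) + I * (s₂ : ℂ))
            (1 + 2 * I * (s₁₂ : ℂ)) ((1 - t : ℝ) : ℂ))
      (Ioo (1 / 2) 1) volume := by
  have hv : -1 < (-(I * (p₂ : ℂ)) + I * (s₂ : ℂ) - 1 / 2).re := by norm_num
  refine ⟨?_, ?_⟩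
  · exact integrableOn_cpow_mul_cpow_mul_hyp _ _ (natCast_ne_neg_of_re_pos (by simp)) _ hv
      (by norm_num) (by norm_num)
  · exact integrableOn_cpow_mul_cpow_mul_hyp_one_sub _ _ (natCast_ne_neg_of_re_pos (by simp))
      (by norm_num) _ (by norm_num) (by norm_num)
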